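/- Let N ≥ 3 be a natural number, let p : ZMod N → ZMod N be injective, and let S : ZMod N satisfy 2·S ≠ 0. If for every n : ZMod N the difference p(n+1) − p(n) lies in {S, −S}, then either p(n+1) − p(n) = S for all n, or p(n+1) − p(n) = −S for all n. (Perfection Test: a path all of whose edges have the same length must have all its steps equal, i.e. of the same sign.) -/

import Mathlib

/-! If two consecutive steps of an injective path cancel, the path returns to a node after two
steps, so `2 = 0` in the ring of positions; but then `-x = x` for every step `x`, so the two steps
were equal after all. Hence consecutive steps always agree, and a sequence indexed by `ZMod N`
whose consecutive terms agree is constant. -/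

open Function

theorem ZMod.apply_eq_apply_zero_of_periodic_one {N : ℕ} {α : Type*} {f : ZMod N → α}
    (hf : Periodic f 1) (x : ZMod N) : f x = f 0 := by
  obtain ⟨k, rfl⟩ := ZMod.intCast_surjective x
  simpa using hf.int_mul_eq k

theorem eq_or_eq_neg_of_eq_or_eq_neg {G : Type*} [InvolutiveNeg G] {S x y : G}
    (hx : x = S ∨ x = -S) (hy : y = S ∨ y = -S) : y = x ∨ y = -x := by
  rcases hx with rfl | rfl <;> rcases hy with rfl | rfl <;> simp

section Step

variable {R M : Type*} [Ring R] [AddCommGroup M] [Module R M]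

def step (p : R → M) (n : R) : M := p (n + 1) - p n

theorem step_succ_eq_of_eq_neg {p : R → M} (hp : Injective p) {n : R}
    (h : step p (n + 1) = -step p n) : step p (n + 1) = step p n := by
  have hback : p (n + 1 + 1) = p n := by
    rwa [step, step, neg_sub, sub_left_inj] at h
  have htwo : (2 : R) = 0 := by
    simpa only [add_assoc, add_eq_left, one_add_one_eq_two] using hp hback
  have hdouble : step p n + step p n = 0 := by
    rw [← two_smul R, htwo, zero_smul]
  rw [h, neg_eq_of_add_eq_zero_left hdouble]

end Step

theorem perfection_test_general (N : ℕ) (p : ZMod N → ZMod N)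
    (hp : Function.Injective p) (S : ZMod N)
    (h : ∀ n : ZMod N, p (n + 1) - p n = S ∨ p (n + 1) - p n = -S) :
    (∀ n : ZMod N, p (n + 1) - p n = S) ∨ (∀ n : ZMod N, p (n + 1) - p n = -S) := by
  have hperiodic : Periodic (step p) 1 := fun n => by
    rcases eq_or_eq_neg_of_eq_or_eq_neg (h n) (h (n + 1)) with hsame | hopposite
    · exact hsame
    · exact step_succ_eq_of_eq_neg hp hopposite
  have hconst := ZMod.apply_eq_apply_zero_of_periodic_one hperiodic
  rcases h 0 with h0 | h0
  · exact .inl fun n => (hconst n).trans h0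
  · exact .inr fun n => (hconst n).trans h0

/-- **Perfection Test.** For `N ≥ 3`, an injective path `p : ZMod N → ZMod N` all of
whose steps lie in `{S, -S}` (with `2·S ≠ 0`) has all steps equal to `S`, or all steps
equal to `-S`. -/
theorem perfection_test (N : ℕ) (hN : 3 ≤ N) (p : ZMod N → ZMod N)
    (hp : Function.Injective p) (S : ZMod N) (hS : 2 * S ≠ 0)
    (h : ∀ n : ZMod N, p (n + 1) - p n = S ∨ p (n + 1) - p n = -S) :
    (∀ n : ZMod N, p (n + 1) - p n = S) ∨ (∀ n : ZMod N, p (n + 1) - p n = -S) :=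
  perfection_test_general N p hp S h
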